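/- Let p = (p_1, ..., p_n) be a probability distribution with all components strictly positive and let 1 ≤ m < n. Then there exists a contiguous m-aggregation q = (q_1, ..., q_m) of p and an integer 0 ≤ k* < m such that, after reordering the components of q in non-increasing order: (i) q_1, ..., q_{k*} are all larger than 2/m and coincide with the k* largest components of p, and (ii) q_{k*+1}, ..., q_m are all at most 2/m. -/

import Mathlib

/-!
Cut `p` greedily into blocks: a block is closed as soon as the next atom would push its mass above
`T = 2/m`, and an atom heavier than `T` is a block on its own. Any two consecutive blocks then carry
mass above `T`, so there are at most `m` blocks, and splitting light blocks brings their number to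
exactly `m`. A block of mass above `T` is then a single heavy atom and every heavy atom is such a
block, so the components above `2/m` of `q` and of `p` agree as multisets. There are fewer than `m`
of them because each exceeds `2/m` and the total mass is `1`; sorting in non-increasing order puts
them first.
-/

/-- `q` (given by its first `m` values) is a contiguous `m`-aggregation of the first
`n` values of `p`. -/
def IsContigAgg (n m : ℕ) (p q : ℕ → ℝ) : Prop :=
  ∃ ind : ℕ → ℕ, ind 0 = 0 ∧ ind m = n ∧ (∀ j < m, ind j < ind (j + 1)) ∧
    ∀ j < m, q j = ∑ k ∈ Finset.Ico (ind j) (ind (j + 1)), p k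

open Finset

def IsAdmissiblePartition (p : ℕ → ℝ) (T : ℝ) (r a b : ℕ) (ind : ℕ → ℕ) : Prop :=
  ind 0 = a ∧ ind r = b ∧ ∀ j < r, ind j < ind (j + 1) ∧
    (ind (j + 1) = ind j + 1 ∨ ∑ k ∈ Ico (ind j) (ind (j + 1)), p k ≤ T)

theorem filter_lt_singleton_sum_Ico_eq {p : ℕ → ℝ} {T : ℝ} {x y : ℕ}
    (hp : ∀ k ∈ Ico x y, 0 ≤ p k) (hblock : y = x + 1 ∨ ∑ k ∈ Ico x y, p k ≤ T) :
    ({∑ k ∈ Ico x y, p k} : Multiset ℝ).filter (T < ·) =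
      ((Ico x y).val.map p).filter (T < ·) := by
  rcases hblock with rfl | hsmall
  · simp [Nat.Ico_succ_singleton]
  · have hle : ∀ k ∈ Ico x y, p k ≤ T := fun k hk => (single_le_sum hp hk).trans hsmall
    rw [Multiset.filter_eq_nil.2 (by simpa using hsmall), Multiset.filter_eq_nil.2 ?_]
    simp only [Multiset.mem_map, mem_val, forall_exists_index, and_imp]
    rintro _ k hk rfl
    exact (hle k hk).not_gt

namespace IsAdmissiblePartition

variable {p : ℕ → ℝ} {T : ℝ} {r a b : ℕ} {ind : ℕ → ℕ}

theorem nil (p : ℕ → ℝ) (T : ℝ) (b : ℕ) : IsAdmissiblePartition p T 0 b b fun _ => b :=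
  ⟨rfl, rfl, by simp⟩

theorem cons {c : ℕ} (hac : a < c) (hblock : c = a + 1 ∨ ∑ k ∈ Ico a c, p k ≤ T)
    (h : IsAdmissiblePartition p T r c b ind) :
    IsAdmissiblePartition p T (r + 1) a b fun | 0 => a | j + 1 => ind j := by
  obtain ⟨h0, hr, hblocks⟩ := h
  refine ⟨rfl, hr, fun j hj => ?_⟩
  cases j with
  | zero =>
    show a < ind 0 ∧ (ind 0 = a + 1 ∨ ∑ k ∈ Ico a (ind 0), p k ≤ T)
    exact h0 ▸ ⟨hac, hblock⟩
  | succ j => exact hblocks j (by omega)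

theorem tail (h : IsAdmissiblePartition p T (r + 1) a b ind) :
    IsAdmissiblePartition p T r (ind 1) b fun j => ind (j + 1) :=
  ⟨rfl, h.2.1, fun j hj => h.2.2 (j + 1) (by omega)⟩

theorem init (h : IsAdmissiblePartition p T (r + 1) a b ind) :
    IsAdmissiblePartition p T r a (ind r) ind :=
  ⟨h.1, rfl, fun j hj => h.2.2 j (by omega)⟩

theorem head (h : IsAdmissiblePartition p T (r + 1) a b ind) :
    a < ind 1 ∧ (ind 1 = a + 1 ∨ ∑ k ∈ Ico a (ind 1), p k ≤ T) := by
  simpa only [h.1] using h.2.2 0 r.succ_pos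

theorem le (h : IsAdmissiblePartition p T r a b ind) : a ≤ b := by
  induction r generalizing b with
  | zero => exact h.1 ▸ h.2.1 ▸ le_rfl
  | succ r ih => exact (ih h.init).trans (h.2.1 ▸ (h.2.2 r (by omega)).1.le)

theorem exists_succ (hp : ∀ k < b, 0 ≤ p k) (h : IsAdmissiblePartition p T r a b ind)
    (hr : r + a < b) : ∃ ind', IsAdmissiblePartition p T (r + 1) a b ind' := by
  induction r generalizing a ind with
  | zero => exact absurd (h.1.symm.trans h.2.1) (by omega)
  | succ r ih =>
    obtain ⟨ha, hblock⟩ := h.head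
    by_cases hc : r + ind 1 < b
    · obtain ⟨ind', h'⟩ := ih h.tail hc
      exact ⟨_, h'.cons ha hblock⟩
    · have hsmall : ∑ k ∈ Ico a (ind 1), p k ≤ T := hblock.resolve_left (by omega)
      have hrest : ∑ k ∈ Ico (a + 1) (ind 1), p k ≤ T := by
        have hb : ind 1 ≤ b := h.tail.le
        rw [sum_eq_sum_Ico_succ_bot ha] at hsmall
        linarith [hp a (by omega)]
      exact ⟨_, (h.tail.cons (by omega) (Or.inr hrest)).cons a.lt_succ_self (Or.inl rfl)⟩

theorem exists_of_le (hp : ∀ k < b, 0 ≤ p k) (h : IsAdmissiblePartition p T r a b ind)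
    {s : ℕ} (hrs : r ≤ s) (hs : s + a ≤ b) :
    ∃ ind', IsAdmissiblePartition p T s a b ind' := by
  induction s, hrs using Nat.le_induction with
  | base => exact ⟨ind, h⟩
  | succ s _ ih =>
    obtain ⟨ind', h'⟩ := ih (by omega)
    exact h'.exists_succ hp (by omega)

theorem filter_lt_map_sum_eq (hp : ∀ k < b, 0 ≤ p k) (h : IsAdmissiblePartition p T r a b ind) :
    ((range r).val.map fun j => ∑ k ∈ Ico (ind j) (ind (j + 1)), p k).filter (T < ·) =
      ((Ico a b).val.map p).filter (T < ·) := by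
  induction r generalizing b with
  | zero => simp [← h.1, ← h.2.1]
  | succ r ih =>
    obtain ⟨hlt, hblock⟩ := h.2.2 r r.lt_succ_self
    rw [h.2.1] at hlt hblock
    have hIco : (Ico a b).val = (Ico a (ind r)).val + (Ico (ind r) b).val :=
      (Multiset.Ico_add_Ico_eq_Ico h.init.le hlt.le).symm
    rw [range_val, Multiset.range_succ, Multiset.map_cons, ← Multiset.singleton_add,
      Multiset.filter_add, ← range_val, ih (fun k hk => hp k (by omega)) h.init, hIco,
      Multiset.map_add, Multiset.filter_add, add_comm, h.2.1]
    exact congrArg _ (filter_lt_singleton_sum_Ico_eq (fun k hk => hp k (mem_Ico.1 hk).2) hblock)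

end IsAdmissiblePartition

-- The first block is as long as possible, so with the first atom of the next block it has mass
-- above `T`; summed over consecutive blocks this gives the bound.
theorem exists_admissiblePartition_greedy {p : ℕ → ℝ} {T : ℝ} {a b : ℕ}
    (hp : ∀ k < b, 0 ≤ p k) (hab : a < b) :
    ∃ r ind, IsAdmissiblePartition p T r a b ind ∧
      ((r : ℝ) - 1) * T + ∑ k ∈ Ico a (ind 1), p k ≤ 2 * ∑ k ∈ Ico a b, p k := by
  classical
  set c := Nat.findGreatest (fun c => c = a + 1 ∨ ∑ k ∈ Ico a c, p k ≤ T) b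
  have hac : a + 1 ≤ c := Nat.le_findGreatest hab (Or.inl rfl)
  have hblock : c = a + 1 ∨ ∑ k ∈ Ico a c, p k ≤ T :=
    Nat.findGreatest_spec (P := fun c => c = a + 1 ∨ ∑ k ∈ Ico a c, p k ≤ T) hab
      (Or.inl rfl)
  rcases (Nat.findGreatest_le b : c ≤ b).eq_or_lt with hcb_eq | hcb
  · refine ⟨1, _, (IsAdmissiblePartition.nil p T b).cons hab (hcb_eq ▸ hblock), ?_⟩
    have : 0 ≤ ∑ k ∈ Ico a b, p k := sum_nonneg fun k hk => hp k (mem_Ico.1 hk).2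
    simp only [Nat.cast_one, sub_self, zero_mul, zero_add]
    linarith
  · have hbad : T < ∑ k ∈ Ico a (c + 1), p k := by
      have := Nat.findGreatest_is_greatest (lt_add_one c) hcb
      push Not at this
      exact this.2
    obtain ⟨r, ind, h, hinv⟩ := exists_admissiblePartition_greedy (T := T) hp hcb
    refine ⟨r + 1, _, h.cons (by omega) hblock, ?_⟩
    have hr : r ≠ 0 := by
      rintro rfl
      exact hcb.ne (h.1.symm.trans h.2.1)
    obtain ⟨s, rfl⟩ := Nat.exists_eq_succ_of_ne_zero hr
    have hpc : p c ≤ ∑ k ∈ Ico c (ind 1), p k := by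
      have hb : ind 1 ≤ b := h.tail.le
      rw [sum_eq_sum_Ico_succ_bot h.head.1, le_add_iff_nonneg_right]
      exact sum_nonneg fun k hk => hp k (by simp at hk; omega)
    rw [sum_Ico_succ_top (by omega)] at hbad
    rw [← sum_Ico_consecutive p (by omega : a ≤ c) hcb.le]
    simp only [Nat.cast_add, Nat.cast_one, add_sub_cancel_right, h.1]
    linarith
termination_by b - a

theorem exists_admissiblePartition_two_div {p : ℕ → ℝ} {m n : ℕ} (hm : 0 < m)
    (hmn : m ≤ n) (hp : ∀ k < n, 0 < p k) (hsum : ∑ k ∈ range n, p k = 1) :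
    ∃ ind, IsAdmissiblePartition p (2 / m) m 0 n ind := by
  obtain ⟨r, ind, h, hinv⟩ := exists_admissiblePartition_greedy (T := 2 / m) (a := 0)
    (fun k hk => (hp k hk).le) (by omega)
  obtain ⟨s, rfl⟩ : ∃ s, r = s + 1 := by
    refine Nat.exists_eq_add_one.2 (Nat.pos_of_ne_zero fun hr => ?_)
    have := h.1.symm.trans (hr ▸ h.2.1)
    omega
  have hfirst : 0 < ∑ k ∈ Ico 0 (ind 1), p k :=
    sum_pos (fun k hk => hp k ((mem_Ico.1 hk).2.trans_le h.tail.le)) (nonempty_Ico.2 h.head.1)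
  rw [range_eq_Ico] at hsum
  rw [hsum] at hinv
  simp only [Nat.cast_add, Nat.cast_one, add_sub_cancel_right, mul_div_assoc'] at hinv
  have hs : (s : ℝ) * 2 / m < 2 := by linarith
  rw [div_lt_iff₀ (by exact_mod_cast hm)] at hs
  have hsm : (s : ℝ) < m := by linarith
  exact h.exists_of_le (fun k hk => (hp k hk).le) (by exact_mod_cast hsm) (by omega)

namespace Multiset

variable {α : Type*}

theorem map_getD_sort_range (M : Multiset α) (r : α → α → Prop) [DecidableRel r]
    [IsTrans α r] [Std.Antisymm r] [Std.Total r] (d : α) :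
    (Finset.range (card M)).val.map (fun j => (M.sort r).getD j d) = M := by
  conv_rhs => rw [← sort_eq M r]
  rw [range_val, ← length_sort (r := r), Multiset.range, map_coe, coe_eq_coe]
  refine List.Perm.of_eq (List.ext_getElem (by simp) fun i h₁ h₂ => ?_)
  simp [List.getElem?_eq_getElem h₂]

variable [LinearOrder α]

theorem sort_ge_eq_filter_append (M : Multiset α) (t : α) :
    M.sort (· ≥ ·) =
      (M.filter (t < ·)).sort (· ≥ ·) ++ (M.filter fun x => ¬t < x).sort (· ≥ ·) := by
  refine List.Perm.eq_of_pairwise' (pairwise_sort _ _) ?_ ?_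
  · refine List.pairwise_append.2 ⟨pairwise_sort _ _, pairwise_sort _ _, fun x hx y hy => ?_⟩
    rw [mem_sort, mem_filter] at hx hy
    exact (not_lt.1 hy.2).trans hx.2.le
  · rw [← coe_eq_coe, ← coe_add, sort_eq, sort_eq, sort_eq, filter_add_not]

theorem getD_sort_ge_antitone (M : Multiset α) (d : α) {i j : ℕ} (hij : i ≤ j)
    (hj : j < card M) :
    (M.sort (· ≥ ·)).getD j d ≤ (M.sort (· ≥ ·)).getD i d := by
  have hlen := length_sort (s := M) (r := (· ≥ ·))
  rw [List.getD_eq_getElem _ _ (by omega), List.getD_eq_getElem _ _ (by omega)]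
  exact (List.sortedGE_iff_pairwise.2 (pairwise_sort M _)).getElem_ge_getElem_of_le hij

theorem getD_sort_ge_of_lt_card_filter (M : Multiset α) (t d : α) {j : ℕ}
    (hj : j < card (M.filter (t < ·))) :
    (M.sort (· ≥ ·)).getD j d = ((M.filter (t < ·)).sort (· ≥ ·)).getD j d := by
  rw [sort_ge_eq_filter_append M t, List.getD_append _ _ _ _ (by rwa [length_sort])]

theorem lt_getD_sort_ge (M : Multiset α) (t d : α) {j : ℕ} (hj : j < card (M.filter (t < ·))) :
    t < (M.sort (· ≥ ·)).getD j d := by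
  rw [getD_sort_ge_of_lt_card_filter M t d hj, List.getD_eq_getElem _ _ (by rwa [length_sort])]
  exact (mem_filter.1 ((mem_sort _).1 (List.getElem_mem _))).2

theorem getD_sort_ge_le (M : Multiset α) (t d : α) {j : ℕ} (hj : card (M.filter (t < ·)) ≤ j)
    (hjM : j < card M) : (M.sort (· ≥ ·)).getD j d ≤ t := by
  have hcard := card_add (M.filter (t < ·)) (M.filter fun x => ¬t < x)
  rw [filter_add_not] at hcard
  rw [sort_ge_eq_filter_append M t, List.getD_append_right _ _ _ _ (by rwa [length_sort]),
    List.getD_eq_getElem _ _ (by simp only [length_sort]; omega)]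
  exact not_lt.1 ((mem_filter (p := fun x => ¬t < x)).1 ((mem_sort _).1 (List.getElem_mem _))).2

theorem card_filter_lt_nsmul_le_sum {β : Type*} [AddCommMonoid β] [LinearOrder β]
    [IsOrderedAddMonoid β] {M : Multiset β} (hM : ∀ x ∈ M, 0 ≤ x) (t : β) :
    card (M.filter (t < ·)) • t ≤ M.sum := by
  calc card (M.filter (t < ·)) • t ≤ (M.filter (t < ·)).sum :=
        card_nsmul_le_sum fun x hx => (mem_filter.1 hx).2.le
    _ ≤ (M.filter (t < ·)).sum + (M.filter fun x => ¬t < x).sum :=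
        le_add_of_nonneg_right (sum_nonneg fun x hx => hM x (mem_of_mem_filter hx))
    _ = M.sum := by rw [← sum_add, filter_add_not]

end Multiset

theorem card_filter_two_div_lt {p : ℕ → ℝ} {m n : ℕ} (hm : 0 < m)
    (hp : ∀ k < n, 0 ≤ p k) (hsum : ∑ k ∈ range n, p k = 1) :
    Multiset.card (((range n).val.map p).filter ((2 / m : ℝ) < ·)) < m := by
  have hm₀ : (0 : ℝ) < m := by exact_mod_cast hm
  have h := Multiset.card_filter_lt_nsmul_le_sum (M := (range n).val.map p)
    (by simpa using hp) (2 / m : ℝ)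
  rw [nsmul_eq_mul, ← sum_eq_multiset_sum, hsum, mul_div_assoc', div_le_one hm₀] at h
  rw [← Nat.cast_lt (α := ℝ)]
  linarith

/-- There exists a contiguous `m`-aggregation `q` of `p` and `k* < m`
such that, after sorting `q` in non-increasing order, the first `k*` components
exceed `2/m` and coincide with the `k*` largest components of `p`, while all the
remaining components are at most `2/m`. -/
theorem greedy_output_structure
    (n m : ℕ) (hm : 1 ≤ m) (hmn : m < n)
    (p : ℕ → ℝ) (hp : ∀ k < n, 0 < p k)
    (hsum : ∑ k ∈ Finset.range n, p k = 1) :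
    ∃ (q : ℕ → ℝ) (kstar : ℕ), IsContigAgg n m p q ∧ kstar < m ∧
      ∃ qs : ℕ → ℝ,
        Multiset.map qs (Finset.range m).val = Multiset.map q (Finset.range m).val ∧
        (∀ a b : ℕ, a ≤ b → b < m → qs b ≤ qs a) ∧
        (∃ ps : ℕ → ℝ,
          Multiset.map ps (Finset.range n).val = Multiset.map p (Finset.range n).val ∧
          (∀ a b : ℕ, a ≤ b → b < n → ps b ≤ ps a) ∧
          ∀ j < kstar, qs j = ps j) ∧
        (∀ j < kstar, 2 / (m : ℝ) < qs j) ∧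
        (∀ j, kstar ≤ j → j < m → qs j ≤ 2 / (m : ℝ)) := by
  have hp₀ : ∀ k < n, 0 ≤ p k := fun k hk => (hp k hk).le
  obtain ⟨ind, hind⟩ := exists_admissiblePartition_two_div hm hmn.le hp hsum
  set T : ℝ := 2 / m
  set q : ℕ → ℝ := fun j => ∑ k ∈ Ico (ind j) (ind (j + 1)), p k
  set Q := (range m).val.map q
  set P := (range n).val.map p
  have hfilter : Q.filter (T < ·) = P.filter (T < ·) := by
    simpa only [← range_eq_Ico] using hind.filter_lt_map_sum_eq hp₀
  have hcard : Multiset.card (P.filter (T < ·)) < m := card_filter_two_div_lt hm hp₀ hsum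
  have hagg : IsContigAgg n m p q :=
    ⟨ind, hind.1, hind.2.1, fun j hj => (hind.2.2 j hj).1, fun j _ => rfl⟩
  have hQ : Multiset.card Q = m := by simp [Q]
  have hP : Multiset.card P = n := by simp [P]
  refine ⟨q, Multiset.card (P.filter (T < ·)), hagg, hcard,
    fun j => (Q.sort (· ≥ ·)).getD j 0,
    by simpa only [hQ] using Q.map_getD_sort_range (· ≥ ·) 0,
    fun i j hij hj => Q.getD_sort_ge_antitone 0 hij (hQ ▸ hj),
    ⟨fun j => (P.sort (· ≥ ·)).getD j 0,
      by simpa only [hP] using P.map_getD_sort_range (· ≥ ·) 0,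
      fun i j hij hj => P.getD_sort_ge_antitone 0 hij (hP ▸ hj), fun j hj => ?_⟩,
    fun j hj => Q.lt_getD_sort_ge T 0 (hfilter ▸ hj),
    fun j hj hjm => Q.getD_sort_ge_le T 0 (hfilter ▸ hj) (hQ ▸ hjm)⟩
  dsimp only
  rw [Q.getD_sort_ge_of_lt_card_filter T 0 (hfilter ▸ hj), hfilter,
    P.getD_sort_ge_of_lt_card_filter T 0 hj]
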